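/- Let k ≥ 4 and let G be a graph with no induced cycle of length at least k. Then L(G)^2 has no induced cycle of length at least k. -/

import Mathlib

open SimpleGraph

/-- The square of a graph: same vertices, adjacency iff distance 1 or 2. -/
def SimpleGraph.square {V : Type*} (G : SimpleGraph V) : SimpleGraph V where
  Adj u v := u ≠ v ∧ (G.Adj u v ∨ ∃ w, G.Adj u w ∧ G.Adj w v)
  symm := ⟨by
    rintro u v ⟨h, h' | ⟨w, hw1, hw2⟩⟩
    · exact ⟨h.symm, Or.inl h'.symm⟩
    · exact ⟨h.symm, Or.inr ⟨w, hw2.symm, hw1.symm⟩⟩⟩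
  loopless := ⟨fun v h => h.1 rfl⟩

/-- `G` has an induced cycle of length `n`. -/
def SimpleGraph.HasInducedCycle {V : Type*} (G : SimpleGraph V) (n : ℕ) : Prop :=
  Nonempty (cycleGraph n ↪g G)

/-- A graph is chordal if it has no induced cycle of length at least 4. -/
def SimpleGraph.Chordal {V : Type*} (G : SimpleGraph V) : Prop :=
  ∀ n, 4 ≤ n → ¬ G.HasInducedCycle n

/-!
Let `e₀, …, e_{n-1}` be an induced `n`-cycle of `L(G)²`. Edges `e_i`, `e_j` with `i`, `j` not
cyclically adjacent are at distance at least three in `L(G)`: no endpoint of one equals or is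
adjacent to an endpoint of the other. So labelling each vertex of `⋃ eᵢ` by the index of an edge
containing it gives a map to `ZMod n` under which adjacent vertices get equal or adjacent labels,
and the closed walk through `e₀, e₁, …` winds once around `ZMod n`. A shortest closed walk with
nonzero winding number is an induced cycle, because a repeated vertex or a chord splits it into
two shorter closed walks whose winding numbers add up; and it has length at least `n`, because
each step changes the label by at most one.
-/

open Finset

namespace ZMod

variable {n : ℕ}

def Near (a b : ZMod n) : Prop := b = a ∨ b = a + 1 ∨ a = b + 1

def signedStep (a b : ZMod n) : ℤ := if b = a + 1 then 1 else if a = b + 1 then -1 else 0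

lemma add_natCast_ne_self {k : ℕ} (hk : 0 < k) (hkn : k < n) (a : ZMod n) : a + k ≠ a := by
  rw [Ne, add_eq_left, ZMod.natCast_eq_zero_iff]
  exact fun h => absurd (Nat.le_of_dvd hk h) (by omega)

lemma add_one_ne_self (hn : 2 ≤ n) (a : ZMod n) : a + 1 ≠ a := by
  simpa using add_natCast_ne_self (k := 1) one_pos hn a

lemma add_one_add_one_ne_self (hn : 3 ≤ n) (a : ZMod n) : a + 1 + 1 ≠ a := by
  simpa [add_assoc, one_add_one_eq_two] using add_natCast_ne_self (k := 2) two_pos hn a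

lemma abs_signedStep_le (a b : ZMod n) : |signedStep a b| ≤ 1 := by
  unfold signedStep; split_ifs <;> simp

lemma signedStep_swap (hn : 3 ≤ n) (a b : ZMod n) : signedStep b a = -signedStep a b := by
  by_cases hb : b = a + 1
  · subst hb; simp [signedStep, (add_one_add_one_ne_self hn a).symm]
  · by_cases ha : a = b + 1
    · subst ha; simp [signedStep, (add_one_add_one_ne_self hn b).symm]
    · simp [signedStep, hb, ha]

lemma signedStep_self (hn : 2 ≤ n) (a : ZMod n) : signedStep a a = 0 := by
  simp [signedStep, (add_one_ne_self hn a).symm]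

lemma intCast_signedStep (hn : 3 ≤ n) {a b : ZMod n} (h : Near a b) :
    (signedStep a b : ZMod n) = b - a := by
  rcases h with rfl | rfl | rfl
  · simp [signedStep_self (show 2 ≤ n by omega)]
  · simp [signedStep]
  · simp [signedStep, (add_one_add_one_ne_self hn b).symm]

lemma intCast_eq_intCast_iff_of_abs_sub_lt {x y : ℤ} (h : |x - y| < n) :
    (x : ZMod n) = y ↔ x = y := by
  refine ⟨fun hxy => ?_, by rintro rfl; rfl⟩
  rw [ZMod.intCast_eq_intCast_iff_dvd_sub] at hxy
  linarith [Int.eq_zero_of_abs_lt_dvd hxy (by rwa [abs_sub_comm])]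

lemma signedStep_add_intCast (hn : 3 ≤ n) (a : ZMod n) {d : ℤ} (hd : |d| ≤ 1) :
    signedStep a (a + d) = d := by
  have hnear : Near a (a + d) := by
    rcases (show d = 0 ∨ d = 1 ∨ d = -1 by rw [abs_le] at hd; omega) with rfl | rfl | rfl <;>
      simp [Near]
  have hs := abs_signedStep_le a (a + d)
  rw [abs_le] at hs hd
  rw [← intCast_eq_intCast_iff_of_abs_sub_lt (n := n) (abs_sub_lt_iff.2 ⟨by omega, by omega⟩),
    intCast_signedStep hn hnear]
  ring

lemma abs_le_one_of_near_add_intCast (hn : 4 ≤ n) {a : ZMod n} {d : ℤ} (hd : |d| ≤ 2)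
    (h : Near a (a + d)) : |d| ≤ 1 := by
  rw [abs_le] at hd ⊢
  have key : ∀ e : ℤ, |e| ≤ 1 → (d : ZMod n) = e → d = e := fun e he =>
    (intCast_eq_intCast_iff_of_abs_sub_lt (abs_sub_lt_iff.2 (by rw [abs_le] at he; omega))).1
  rcases h with h | h | h
  · have := key 0 (by simp) (by simpa using h); omega
  · have := key 1 (by simp) (by simpa using h); omega
  · have := key (-1) (by simp) (by push_cast; linear_combination -h); omega

lemma abs_add_signedStep_sub_signedStep_le (hn : 4 ≤ n) {a p q : ZMod n} {β : ℤ} (hβ : |β| ≤ 1)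
    (hp : Near a p) (hq : Near (a + (β : ZMod n)) q) (haq : Near a q) (hpq : Near p q) :
    |β + signedStep (a + (β : ZMod n)) q - signedStep a p| ≤ 1 := by
  set r := signedStep a p
  set s := signedStep (a + (β : ZMod n)) q
  have hr : p = a + r := by rw [intCast_signedStep (by omega) hp]; ring
  have hs : q = a + ((β + s : ℤ) : ZMod n) := by
    rw [Int.cast_add, intCast_signedStep (by omega) hq]; ring
  have hr₁ := abs_signedStep_le a p
  have hs₁ := abs_signedStep_le (a + (β : ZMod n)) q
  rw [abs_le] at hβ hr₁ hs₁
  have hβs : |β + s| ≤ 1 :=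
    abs_le_one_of_near_add_intCast hn (abs_le.2 ⟨by omega, by omega⟩) (hs ▸ haq)
  rw [abs_le] at hβs
  refine abs_le_one_of_near_add_intCast hn (a := p) (abs_le.2 ⟨by omega, by omega⟩) ?_
  convert hpq using 1
  rw [hs, hr]; push_cast; ring

end ZMod

lemma Finset.sum_range_add_of_periodic {M : Type*} [AddCancelCommMonoid M] {f : ℕ → M} {L : ℕ}
    (hf : Function.Periodic f L) (i : ℕ) : ∑ k ∈ range L, f (k + i) = ∑ k ∈ range L, f k := by
  induction i with
  | zero => rfl
  | succ i ih =>
    have := sum_range_succ' (fun k => f (k + i)) L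
    rw [sum_range_succ, zero_add, add_comm L i, hf i, add_left_inj] at this
    simpa only [← add_assoc, add_right_comm _ 1 i, ih] using this.symm

section Displacement

variable {n : ℕ} {ψ : ℕ → ZMod n} {L : ℕ}

/-- For a closed path `ψ 0, …, ψ L = ψ 0` in the cycle `ZMod n`, `n` times its winding number. -/
def displacement (ψ : ℕ → ZMod n) (L : ℕ) : ℤ :=
  ∑ k ∈ range L, ZMod.signedStep (ψ k) (ψ (k + 1))

lemma displacement_eq_sub_of_lift (hn : 3 ≤ n) {h : ℕ → ℤ} (hψ : ∀ k ≤ L, (h k : ZMod n) = ψ k)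
    (hstep : ∀ k < L, |h (k + 1) - h k| ≤ 1) : displacement ψ L = h L - h 0 := by
  rw [← sum_range_sub h]
  refine sum_congr rfl fun k hk => ?_
  have hk := mem_range.1 hk
  have hcast : ((h (k + 1) : ℤ) : ZMod n) = h k + ((h (k + 1) - h k : ℤ) : ZMod n) := by
    push_cast; ring
  rw [← hψ k hk.le, ← hψ (k + 1) hk, hcast, ZMod.signedStep_add_intCast hn _ (hstep k hk)]

lemma displacement_comp_add (hψ : Function.Periodic ψ L) (i : ℕ) :
    displacement (fun k => ψ (k + i)) L = displacement ψ L := by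
  unfold displacement
  rw [← Finset.sum_range_add_of_periodic (f := fun k => ZMod.signedStep (ψ k) (ψ (k + 1)))
    (fun k => by simp only [add_right_comm k L 1, hψ _]) i]
  simp only [add_right_comm _ 1 i]

lemma displacement_mod_succ (ψ : ℕ → ZMod n) (m : ℕ) :
    displacement (fun k => ψ (k % (m + 1))) (m + 1) =
      displacement ψ m + ZMod.signedStep (ψ m) (ψ 0) := by
  rw [displacement, sum_range_succ, Nat.mod_eq_of_lt m.lt_succ_self, Nat.mod_self]
  congr 1
  refine sum_congr rfl fun k hk => ?_
  have hk := mem_range.1 hk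
  rw [Nat.mod_eq_of_lt (by omega), Nat.mod_eq_of_lt (by omega)]

lemma abs_displacement_le (ψ : ℕ → ZMod n) (L : ℕ) : |displacement ψ L| ≤ L :=
  (abs_sum_le_sum_abs _ _).trans <| by
    simpa using sum_le_sum fun k (_ : k ∈ range L) => ZMod.abs_signedStep_le (ψ k) (ψ (k + 1))

lemma dvd_displacement (hn : 3 ≤ n) (hψ : ∀ k < L, (ψ k).Near (ψ (k + 1))) (hL : ψ L = ψ 0) :
    (n : ℤ) ∣ displacement ψ L := by
  rw [← ZMod.intCast_zmod_eq_zero_iff_dvd, displacement, Int.cast_sum,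
    sum_congr rfl fun k hk => ZMod.intCast_signedStep hn (hψ k (mem_range.1 hk)),
    sum_range_sub ψ, hL, sub_self]

lemma displacement_eq_of_near_halfCeil (hn : 4 ≤ n) (hL : ψ (2 * n) = ψ 0)
    (hψ : ∀ k, (((k + 1) / 2 : ℕ) : ZMod n).Near (ψ k))
    (hψ' : ∀ k, (((k + 1) / 2 : ℕ) : ZMod n).Near (ψ (k + 1)))
    (hψψ : ∀ k, (ψ k).Near (ψ (k + 1))) :
    displacement ψ (2 * n) = n := by
  -- the integer lift of `ψ k` nearest to `⌈k/2⌉`; it gains `n` along the path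
  let lift (k : ℕ) : ℤ := ((k + 1) / 2 : ℕ) + ZMod.signedStep ((k + 1) / 2 : ℕ) (ψ k)
  have hlift : displacement ψ (2 * n) = lift (2 * n) - lift 0 := by
    refine displacement_eq_sub_of_lift (by omega) (fun k _ => ?_) (fun k _ => ?_)
    · simp only [lift, Int.cast_add, Int.cast_natCast,
        ZMod.intCast_signedStep (by omega) (hψ k)]
      exact add_sub_cancel _ _
    · set β : ℤ := ((k + 1 + 1) / 2 : ℕ) - ((k + 1) / 2 : ℕ)
      have hβ : |β| ≤ 1 := abs_le.2 ⟨by omega, by omega⟩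
      have hnext : (((k + 1 + 1) / 2 : ℕ) : ZMod n) = ((k + 1) / 2 : ℕ) + (β : ZMod n) := by
        simp only [β, Int.cast_sub, Int.cast_natCast]; ring
      have hmove := ZMod.abs_add_signedStep_sub_signedStep_le hn hβ (hψ k)
        (hnext ▸ hψ (k + 1)) (hψ' k) (hψψ k)
      rw [← hnext] at hmove
      convert hmove using 2
      simp only [lift, β]; ring
  have h2n : (2 * n + 1) / 2 = n := by omega
  rw [hlift]
  simp only [lift, h2n, hL, ZMod.natCast_self, zero_add, show (0 + 1) / 2 = 0 from rfl,
    Nat.cast_zero]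
  omega

end Displacement

namespace SimpleGraph

variable {V : Type*} {G : SimpleGraph V}

/-- A closed walk of length `L`, as an `L`-periodic sequence of vertices that may stay put. -/
def IsLazyClosedWalk (G : SimpleGraph V) (c : ℕ → V) (L : ℕ) : Prop :=
  Function.Periodic c L ∧ ∀ k, c k = c (k + 1) ∨ G.Adj (c k) (c (k + 1))

variable {n : ℕ} {φ : V → ZMod n} {c : ℕ → V} {L : ℕ}

lemma IsLazyClosedWalk.comp_add (hc : G.IsLazyClosedWalk c L) (i : ℕ) :
    G.IsLazyClosedWalk (fun k => c (k + i)) L :=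
  ⟨fun k => by simp only [add_right_comm k L i, hc.1 (k + i)],
    fun k => by simpa only [add_right_comm k 1 i] using hc.2 (k + i)⟩

lemma IsLazyClosedWalk.displacement_comp_add (hc : G.IsLazyClosedWalk c L) (i : ℕ) :
    displacement (φ ∘ fun k => c (k + i)) L = displacement (φ ∘ c) L :=
  _root_.displacement_comp_add (ψ := φ ∘ c) (fun k => congrArg φ (hc.1 k)) i

lemma isLazyClosedWalk_mod_succ {d : ℕ → V} {m : ℕ}
    (hstep : ∀ k < m, d k = d (k + 1) ∨ G.Adj (d k) (d (k + 1)))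
    (hclose : d m = d 0 ∨ G.Adj (d m) (d 0)) :
    G.IsLazyClosedWalk (fun k => d (k % (m + 1))) (m + 1) := by
  refine ⟨fun k => by simp, fun k => ?_⟩
  show d (k % (m + 1)) = d ((k + 1) % (m + 1)) ∨ G.Adj (d (k % (m + 1))) (d ((k + 1) % (m + 1)))
  rw [← Nat.mod_add_mod k (m + 1) 1]
  have hk := Nat.mod_lt k (show 0 < m + 1 by omega)
  rcases Nat.lt_or_ge (k % (m + 1)) m with h | h
  · rw [Nat.mod_eq_of_lt (show k % (m + 1) + 1 < m + 1 by omega)]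
    exact hstep _ h
  · rw [show k % (m + 1) = m by omega, Nat.mod_self]
    exact hclose

lemma IsLazyClosedWalk.exists_shorter_of_eq (hn : 2 ≤ n) (hc : G.IsLazyClosedWalk c L)
    (hL : 2 ≤ L) (h : c 0 = c 1) :
    ∃ c', G.IsLazyClosedWalk c' (L - 1) ∧
      displacement (φ ∘ c') (L - 1) = displacement (φ ∘ c) L := by
  obtain ⟨m, rfl⟩ : ∃ m, L = m + 2 := ⟨L - 2, by omega⟩
  have hend : c (m + 1 + 1) = c 1 := by rw [← h, ← zero_add (m + 1 + 1), hc.1]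
  refine ⟨_, isLazyClosedWalk_mod_succ (d := fun k => c (k + 1)) (fun k _ => hc.2 (k + 1))
    (by simpa [hend] using hc.2 (m + 1)), ?_⟩
  rw [show m + 2 - 1 = m + 1 by omega]
  refine (displacement_mod_succ (fun k => φ (c (k + 1))) m).trans ?_
  rw [displacement, displacement, sum_range_succ' _ (m + 1), sum_range_succ]
  simp only [Function.comp_apply, zero_add, hend, h, ZMod.signedStep_self hn, add_zero]

lemma IsLazyClosedWalk.exists_split (hn : 3 ≤ n) (hc : G.IsLazyClosedWalk c L) {j : ℕ}
    (hj : j ≤ L) (h : c 0 = c j ∨ G.Adj (c 0) (c j)) :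
    ∃ c₁ c₂, G.IsLazyClosedWalk c₁ (j + 1) ∧ G.IsLazyClosedWalk c₂ (L - j + 1) ∧
      displacement (φ ∘ c₁) (j + 1) + displacement (φ ∘ c₂) (L - j + 1) =
        displacement (φ ∘ c) L := by
  have hL : c L = c 0 := by simpa using hc.1 0
  refine ⟨_, _, isLazyClosedWalk_mod_succ (d := c) (fun k _ => hc.2 k) (h.imp Eq.symm Adj.symm),
    isLazyClosedWalk_mod_succ (d := fun k => c (j + k)) (fun k _ => hc.2 (j + k))
      (by simpa [Nat.add_sub_cancel' hj, hL] using h), ?_⟩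
  -- the step between `c j` and `c 0` is taken once in each direction
  refine (congrArg₂ (· + ·) (displacement_mod_succ (φ ∘ c) j)
    (displacement_mod_succ (fun k => φ (c (j + k))) (L - j))).trans ?_
  have hsplit : displacement (φ ∘ c) L =
      displacement (φ ∘ c) j + displacement (fun k => φ (c (j + k))) (L - j) := by
    conv_lhs => rw [← Nat.add_sub_cancel' hj, displacement, sum_range_add]
    rfl
  rw [hsplit, Nat.add_sub_cancel' hj, add_zero, hL, Function.comp_apply, Function.comp_apply,
    ZMod.signedStep_swap hn (φ (c 0))]
  ring

lemma IsLazyClosedWalk.le_of_displacement_ne_zero (hn : 3 ≤ n)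
    (hφ : ∀ ⦃u v⦄, G.Adj u v → (φ u).Near (φ v)) (hc : G.IsLazyClosedWalk c L)
    (hw : displacement (φ ∘ c) L ≠ 0) : n ≤ L := by
  have hdvd := dvd_displacement (ψ := φ ∘ c) hn
    (fun k _ => (hc.2 k).elim (fun h => Or.inl (congrArg φ h).symm) (fun h => hφ h))
    (by simpa using congrArg φ (hc.1 0))
  have := Int.le_of_dvd (abs_pos.2 hw) ((dvd_abs _ _).2 hdvd)
  have := abs_displacement_le (φ ∘ c) L
  omega

lemma cycleGraph_adj_of_lt {a b : Fin L} (hab : a < b) :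
    (cycleGraph L).Adj a b ↔ (b : ℕ) = a + 1 ∨ (b : ℕ) + 1 = a + L := by
  rw [cycleGraph_adj', Fin.coe_sub_iff_lt.2 hab, Fin.sub_val_of_le hab.le]
  omega

lemma IsLazyClosedWalk.hasInducedCycle (hc : G.IsLazyClosedWalk c L)
    (hne : ∀ k, c k ≠ c (k + 1))
    (hchord : ∀ a b, a + 2 ≤ b → b + 2 ≤ a + L → c a ≠ c b ∧ ¬ G.Adj (c a) (c b)) :
    G.HasInducedCycle L := by
  have hadj k : G.Adj (c k) (c (k + 1)) := (hc.2 k).resolve_left (hne k)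
  have key : ∀ a b : Fin L, a < b →
      c a ≠ c b ∧ (G.Adj (c a) (c b) ↔ (cycleGraph L).Adj a b) := by
    intro a b hab
    rw [cycleGraph_adj_of_lt hab]
    have hb := b.isLt
    have hab' : (a : ℕ) < b := hab
    rcases Nat.lt_or_ge (b : ℕ) (a + 2) with h | h
    · have : (b : ℕ) = a + 1 := by omega
      rw [this]; exact ⟨hne a, iff_of_true (hadj a) (Or.inl rfl)⟩
    rcases Nat.lt_or_ge (a + L : ℕ) (b + 2) with h' | h'
    · have ha : (a : ℕ) = 0 := by omega
      have hb' : (b : ℕ) = L - 1 := by omega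
      have hwrap : c (L - 1 + 1) = c 0 := by
        rw [Nat.sub_add_cancel (by omega)]; simpa using hc.1 0
      rw [ha, hb', ← hwrap]
      exact ⟨(hne _).symm, iff_of_true (hadj _).symm (Or.inr (by omega))⟩
    · exact ⟨(hchord a b h h').1, iff_of_false (hchord a b h h').2 (by omega)⟩
  refine ⟨⟨⟨fun a => c a, fun a b hab => ?_⟩, fun {a b} => ?_⟩⟩
  · by_contra hne
    rcases lt_or_gt_of_ne hne with h | h
    · exact (key a b h).1 hab
    · exact (key b a h).1 hab.symm
  · rcases lt_trichotomy a b with h | rfl | h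
    · exact (key a b h).2
    · simp
    · exact (G.adj_comm _ _).trans ((key b a h).2.trans ((cycleGraph L).adj_comm _ _))

theorem IsLazyClosedWalk.exists_hasInducedCycle_of_displacement_ne_zero (hn : 3 ≤ n)
    (hφ : ∀ ⦃u v⦄, G.Adj u v → (φ u).Near (φ v)) (hc : G.IsLazyClosedWalk c L)
    (hw : displacement (φ ∘ c) L ≠ 0) : ∃ m, n ≤ m ∧ G.HasInducedCycle m := by
  induction L using Nat.strong_induction_on generalizing c with
  | _ L ih =>
  have hnL := hc.le_of_displacement_ne_zero hn hφ hw
  by_cases hlazy : ∃ i, c i = c (i + 1)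
  · obtain ⟨i, hi⟩ := hlazy
    obtain ⟨c', hc', hw'⟩ := (hc.comp_add i).exists_shorter_of_eq (φ := φ) (by omega) (by omega)
      (by simpa [add_comm 1 i] using hi)
    exact ih (L - 1) (by omega) hc' (by rwa [hw', hc.displacement_comp_add])
  by_cases hshort : ∃ a b, a + 2 ≤ b ∧ b + 2 ≤ a + L ∧ (c a = c b ∨ G.Adj (c a) (c b))
  · obtain ⟨a, b, hab, hba, h⟩ := hshort
    obtain ⟨c₁, c₂, hc₁, hc₂, hsum⟩ := (hc.comp_add a).exists_split (φ := φ) hn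
      (j := b - a) (by omega) (by simpa [Nat.sub_add_cancel (show a ≤ b by omega)] using h)
    rw [hc.displacement_comp_add] at hsum
    by_cases hw₁ : displacement (φ ∘ c₁) (b - a + 1) = 0
    · exact ih _ (by omega) hc₂ (by rw [hw₁, zero_add] at hsum; rwa [hsum])
    · exact ih _ (by omega) hc₁ hw₁
  push Not at hlazy hshort
  exact ⟨L, hnL, hc.hasInducedCycle hlazy hshort⟩

lemma eq_or_adj_of_mem_edgeSet {e : Sym2 V} (he : e ∈ G.edgeSet) {u v : V} (hu : u ∈ e)
    (hv : v ∈ e) : u = v ∨ G.Adj u v := by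
  by_cases huv : u = v
  · exact Or.inl huv
  · rw [(Sym2.mem_and_mem_iff huv).1 ⟨hu, hv⟩] at he
    exact Or.inr he

lemma lineGraph_square_adj_iff {e₁ e₂ : G.edgeSet} :
    G.lineGraph.square.Adj e₁ e₂ ↔
      e₁ ≠ e₂ ∧ ∃ u ∈ (e₁ : Sym2 V), ∃ v ∈ (e₂ : Sym2 V), u = v ∨ G.Adj u v := by
  simp only [square, lineGraph_adj_iff_exists]
  constructor
  · rintro ⟨hne, ⟨-, u, hu₁, hu₂⟩ | ⟨w, ⟨-, u, hu₁, hu⟩, ⟨-, v, hv, hv₂⟩⟩⟩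
    · exact ⟨hne, u, hu₁, u, hu₂, Or.inl rfl⟩
    · exact ⟨hne, u, hu₁, v, hv₂, eq_or_adj_of_mem_edgeSet w.2 hu hv⟩
  · rintro ⟨hne, u, hu, v, hv, rfl | huv⟩
    · exact ⟨hne, Or.inl ⟨hne, u, hu, hv⟩⟩
    refine ⟨hne, ?_⟩
    let w : G.edgeSet := ⟨s(u, v), huv⟩
    by_cases h₁ : e₁ = w
    · exact Or.inl ⟨hne, v, by simp [h₁, w], hv⟩
    by_cases h₂ : w = e₂
    · exact Or.inl ⟨hne, u, hu, by simp [← h₂, w]⟩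
    exact Or.inr ⟨w, ⟨h₁, u, hu, by simp [w]⟩, ⟨h₂, v, by simp [w], hv⟩⟩

lemma exists_isLazyClosedWalk_along (e : ZMod n → Sym2 V) (he : ∀ i, e i ∈ G.edgeSet)
    (hcons : ∀ i, ∃ x ∈ e i, ∃ y ∈ e (i + 1), x = y ∨ G.Adj x y) :
    ∃ c : ℕ → V, G.IsLazyClosedWalk c (2 * n) ∧ ∀ k, c k ∈ e ((k + 1) / 2 : ℕ) := by
  choose x hx y hy hxy using hcons
  -- the closed walk `x₀ y₀ x₁ y₁ …`
  let c (k : ℕ) : V := if k % 2 = 0 then x (k / 2 : ℕ) else y (k / 2 : ℕ)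
  have hc_even (q : ℕ) : c (2 * q) = x q := by simp [c]
  have hc_odd (q : ℕ) : c (2 * q + 1) = y q := by
    simp [c, show (2 * q + 1) % 2 = 1 by omega, show (2 * q + 1) / 2 = q by omega]
  refine ⟨c, ⟨fun k => ?_, fun k => ?_⟩, fun k => ?_⟩
  · simp only [c]
    rw [show (k + 2 * n) % 2 = k % 2 by omega, show (k + 2 * n) / 2 = k / 2 + n by omega]
    simp
  · obtain ⟨q, rfl | rfl⟩ := Nat.even_or_odd' k
    · rw [hc_even, hc_odd]; exact hxy _
    · rw [hc_odd, show 2 * q + 1 + 1 = 2 * (q + 1) by ring, hc_even]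
      exact eq_or_adj_of_mem_edgeSet (he _) (hy q) (by simpa using hx ((q + 1 : ℕ) : ZMod n))
  · obtain ⟨q, rfl | rfl⟩ := Nat.even_or_odd' k
    · rw [hc_even, show (2 * q + 1) / 2 = q by omega]; exact hx _
    · rw [hc_odd, show (2 * q + 1 + 1) / 2 = q + 1 by omega]; simpa using hy q

theorem exists_hasInducedCycle_of_cyclic_edges (hn : 4 ≤ n) (e : ZMod n → Sym2 V)
    (he : ∀ i, e i ∈ G.edgeSet)
    (hnear : ∀ i j u v, u ∈ e i → v ∈ e j → (u = v ∨ G.Adj u v) → i.Near j)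
    (hcons : ∀ i, ∃ x ∈ e i, ∃ y ∈ e (i + 1), x = y ∨ G.Adj x y) :
    ∃ m, n ≤ m ∧ G.HasInducedCycle m := by
  set W : Set V := {v | ∃ i, v ∈ e i}
  choose idx hidx using fun v : W => v.2
  obtain ⟨c, hc, hce⟩ := exists_isLazyClosedWalk_along e he hcons
  let c' (k : ℕ) : W := ⟨c k, _, hce k⟩
  have hc' : (G.induce W).IsLazyClosedWalk c' (2 * n) :=
    ⟨fun k => Subtype.ext (hc.1 k), fun k => (hc.2 k).imp Subtype.ext id⟩
  have hwind : displacement (idx ∘ c') (2 * n) = n :=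
    displacement_eq_of_near_halfCeil hn (congrArg idx (by simpa using hc'.1 0))
      (fun k => hnear _ _ _ _ (hce k) (hidx (c' k)) (Or.inl rfl))
      (fun k => hnear _ _ _ _ (hce k) (hidx (c' (k + 1))) (hc.2 k))
      (fun k => hnear _ _ _ _ (hidx (c' k)) (hidx (c' (k + 1))) (hc.2 k))
  obtain ⟨m, hm, ⟨f⟩⟩ := hc'.exists_hasInducedCycle_of_displacement_ne_zero (by omega)
    (fun u v huv => hnear _ _ _ _ (hidx u) (hidx v) (Or.inr huv)) (by omega)
  exact ⟨m, hm, ⟨f.trans (Embedding.induce W)⟩⟩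

lemma cycleGraph_adj_finEquiv_symm {m : ℕ} {i j : ZMod (m + 2)} :
    (cycleGraph (m + 2)).Adj ((ZMod.finEquiv _).symm i) ((ZMod.finEquiv _).symm j) ↔
      j = i + 1 ∨ i = j + 1 := by
  rw [cycleGraph_adj, ← map_sub, ← map_sub, ← map_one (ZMod.finEquiv _).symm]
  simp only [EquivLike.apply_eq_iff_eq, sub_eq_iff_eq_add']
  exact or_comm

theorem HasInducedCycle.exists_of_lineGraph_square (hn : 4 ≤ n)
    (h : G.lineGraph.square.HasInducedCycle n) : ∃ m, n ≤ m ∧ G.HasInducedCycle m := by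
  obtain ⟨f⟩ := h
  obtain ⟨m, rfl⟩ : ∃ m, n = m + 2 := ⟨n - 2, by omega⟩
  set σ := (ZMod.finEquiv (m + 2)).symm
  refine exists_hasInducedCycle_of_cyclic_edges hn (fun i => f (σ i)) (fun i => (f (σ i)).2)
    (fun i j u v hu hv huv => ?_) (fun i => ?_)
  · by_contra hij
    have hne : f (σ i) ≠ f (σ j) := fun h => hij (σ.injective (f.injective h) ▸ Or.inl rfl)
    have hadj := lineGraph_square_adj_iff.2 ⟨hne, u, hu, v, hv, huv⟩
    rw [f.map_adj_iff, cycleGraph_adj_finEquiv_symm] at hadj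
    exact hij (Or.inr hadj)
  · exact (lineGraph_square_adj_iff.1
      (f.map_adj_iff.2 (cycleGraph_adj_finEquiv_symm.2 (Or.inl rfl)))).2

end SimpleGraph

/-- If $k ≥ 4$ and G has no induced cycle of length at least k, then $L(G)^2$
has no induced cycle of length at least k. -/
theorem lineGraph_sq_no_long_induced_cycle {V : Type*} (G : SimpleGraph V)
    (k : ℕ) (hk : 4 ≤ k) (hG : ∀ n, k ≤ n → ¬ G.HasInducedCycle n) :
    ∀ n, k ≤ n → ¬ (G.lineGraph.square).HasInducedCycle n := by
  intro n hn hcycle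
  obtain ⟨m, hnm, hm⟩ := hcycle.exists_of_lineGraph_square (hk.trans hn)
  exact hG m (hn.trans hnm) hm
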